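/- Let μ be a Borel probability measure on SL_d(ℤ) and ν a Borel probability measure on the torus T^d = ℝ^d/ℤ^d. Suppose |\widehat{μ*ν}(a₀)| ≥ t₀ > 0 for some a₀ ∈ ℤ^d. Then for any integer k ≥ 1, the set A = { g ∈ Mat_d(ℤ) : |\hat{ν}(a₀ g)| ≥ t₀^{2k}/2 } satisfies (μ^{⊞k} ⊟ μ^{⊞k})(A) ≥ t₀^{2k}/2. -/

import Mathlib

/-!
Write `φ(x) = ∫ e(⟨a₀ g, x⟩) dμ(g)`. The hypothesis says `|∫ φ dν| ≥ t₀`, so by Jensen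
`∫ |φ|^{2k} dν ≥ t₀^{2k}`. Since `g ↦ e(⟨a₀ g, x⟩)` is a character of `(Mat_d(ℤ), +)`,
`|φ|^{2k} = φ^k · conj φ^k` is the transform of `μ^{⊞k} ⊟ μ^{⊞k}` at it, and Fubini gives
`∫ |φ|^{2k} dν = ∫ \hat{ν}(a₀ g) d(μ^{⊞k} ⊟ μ^{⊞k})(g)`.
As `|\hat{ν}| ≤ 1`, the right side is at most the mass of `A` plus `t₀^{2k}/2`.
-/

open MeasureTheory

instance matIntMeasurableSpace {d : ℕ} : MeasurableSpace (Matrix (Fin d) (Fin d) ℤ) :=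
  inferInstanceAs (MeasurableSpace (Fin d → Fin d → ℤ))

/-- The character of the torus `T^d` indexed by `a ∈ ℤ^d`, i.e. `x ↦ e(⟨a, x⟩)`. -/
noncomputable def torusChar {d : ℕ} (a : Fin d → ℤ) (x : Fin d → AddCircle (1 : ℝ)) : ℂ :=
  ∏ i, fourier (a i) (x i)

/-- The Fourier coefficient of a measure `ν` on `T^d` at `a ∈ ℤ^d`. -/
noncomputable def torusFourier {d : ℕ} (ν : Measure (Fin d → AddCircle (1 : ℝ)))
    (a : Fin d → ℤ) : ℂ :=
  ∫ x, torusChar a x ∂ν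

/-- The linear action of an integer matrix on the torus `T^d`. -/
noncomputable def torusAct {d : ℕ} (g : Matrix (Fin d) (Fin d) ℤ) (x : Fin d → AddCircle (1 : ℝ)) :
    Fin d → AddCircle (1 : ℝ) :=
  fun i => ∑ j, g i j • x j

/-- Additive convolution of two measures on `Mat_d(ℤ)`. -/
noncomputable def matAddConv {d : ℕ} (μ ν : Measure (Matrix (Fin d) (Fin d) ℤ)) :
    Measure (Matrix (Fin d) (Fin d) ℤ) :=
  (μ.prod ν).map fun p => p.1 + p.2

/-- Convolution by difference on `Mat_d(ℤ)`. -/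
noncomputable def matSubConv {d : ℕ} (μ ν : Measure (Matrix (Fin d) (Fin d) ℤ)) :
    Measure (Matrix (Fin d) (Fin d) ℤ) :=
  (μ.prod ν).map fun p => p.1 - p.2

/-- `k`-fold additive convolution power (`matAddConvPow μ k = μ^{⊞k}` for `k ≥ 1`). -/
noncomputable def matAddConvPow {d : ℕ} (μ : Measure (Matrix (Fin d) (Fin d) ℤ)) :
    ℕ → Measure (Matrix (Fin d) (Fin d) ℤ)
  | 0 => Measure.dirac 0
  | n + 1 => matAddConv μ (matAddConvPow μ n)

open scoped ComplexConjugate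

section Integral

variable {α : Type*} [MeasurableSpace α] {μ : Measure α} [IsProbabilityMeasure μ]

lemma norm_integral_pow_le_integral_norm_pow {E : Type*} [NormedAddCommGroup E]
    [NormedSpace ℝ E] {f : α → E} (n : ℕ) (hf : Integrable f μ)
    (hfn : Integrable (fun x => ‖f x‖ ^ n) μ) :
    ‖∫ x, f x ∂μ‖ ^ n ≤ ∫ x, ‖f x‖ ^ n ∂μ :=
  calc ‖∫ x, f x ∂μ‖ ^ n ≤ (∫ x, ‖f x‖ ∂μ) ^ n := by
        gcongr; exact norm_integral_le_integral_norm f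
    _ ≤ ∫ x, ‖f x‖ ^ n ∂μ :=
      (convexOn_pow n).map_integral_le (continuous_pow n).continuousOn isClosed_Ici
        (ae_of_all _ fun x => norm_nonneg _) hf.norm hfn

lemma integral_le_measureReal_setOf_le_add {h : α → ℝ} {c : ℝ} (hint : Integrable h μ)
    (hmeas : MeasurableSet {x | c ≤ h x}) (hle : ∀ x, h x ≤ 1) (hc : 0 ≤ c) :
    ∫ x, h x ∂μ ≤ μ.real {x | c ≤ h x} + c := by
  set A := {x | c ≤ h x}
  have hbound : ∀ x, h x ≤ A.indicator 1 x + c := by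
    intro x
    by_cases hx : x ∈ A
    · rw [Set.indicator_of_mem hx, Pi.one_apply]
      linarith [hle x]
    · rw [Set.indicator_of_notMem hx, zero_add]
      exact (not_le.mp hx).le
  have hind : Integrable (A.indicator 1) μ := (integrable_const (1 : ℝ)).indicator hmeas
  calc ∫ x, h x ∂μ ≤ ∫ x, (A.indicator 1 x + c) ∂μ :=
        integral_mono hint (hind.add (integrable_const c)) hbound
    _ = μ.real A + c := by
        rw [integral_add hind (integrable_const c),
          integral_indicator_one hmeas, integral_const, probReal_univ, one_smul]

end Integral

instance matIntCountable {d : ℕ} : Countable (Matrix (Fin d) (Fin d) ℤ) :=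
  inferInstanceAs (Countable (Fin d → Fin d → ℤ))

instance matIntMeasurableSingletonClass {d : ℕ} :
    MeasurableSingletonClass (Matrix (Fin d) (Fin d) ℤ) :=
  inferInstanceAs (MeasurableSingletonClass (Fin d → Fin d → ℤ))

section TorusChar

variable {d : ℕ}

lemma coe_toCircle_sum {T : ℝ} {ι : Type*} (s : Finset ι) (f : ι → AddCircle T) :
    ((AddCircle.toCircle (∑ i ∈ s, f i) : Circle) : ℂ) =
      ∏ i ∈ s, (AddCircle.toCircle (f i) : ℂ) := by
  classical
  induction s using Finset.induction with
  | empty => simp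
  | insert i s hi ih =>
    rw [Finset.sum_insert hi, Finset.prod_insert hi, AddCircle.toCircle_add, Circle.coe_mul, ih]

lemma torusChar_eq_toCircle (a : Fin d → ℤ) (x : Fin d → AddCircle (1 : ℝ)) :
    torusChar a x = AddCircle.toCircle (∑ i, a i • x i) := by
  simp only [torusChar, fourier_apply, coe_toCircle_sum]

lemma norm_torusChar (a : Fin d → ℤ) (x : Fin d → AddCircle (1 : ℝ)) : ‖torusChar a x‖ = 1 := by
  rw [torusChar_eq_toCircle, Circle.norm_coe]

lemma torusChar_zero (x : Fin d → AddCircle (1 : ℝ)) : torusChar 0 x = 1 := by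
  simp [torusChar]

lemma torusChar_add (a b : Fin d → ℤ) (x : Fin d → AddCircle (1 : ℝ)) :
    torusChar (a + b) x = torusChar a x * torusChar b x := by
  simp only [torusChar_eq_toCircle, Pi.add_apply, add_smul, Finset.sum_add_distrib,
    AddCircle.toCircle_add, Circle.coe_mul]

lemma torusChar_neg (a : Fin d → ℤ) (x : Fin d → AddCircle (1 : ℝ)) :
    torusChar (-a) x = conj (torusChar a x) := by
  simp only [torusChar_eq_toCircle, Pi.neg_apply, neg_smul, Finset.sum_neg_distrib,
    AddCircle.toCircle_neg, Circle.coe_inv_eq_conj]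

lemma torusChar_sub (a b : Fin d → ℤ) (x : Fin d → AddCircle (1 : ℝ)) :
    torusChar (a - b) x = torusChar a x * conj (torusChar b x) := by
  rw [sub_eq_add_neg, torusChar_add, torusChar_neg]

lemma torusChar_torusAct (a : Fin d → ℤ) (g : Matrix (Fin d) (Fin d) ℤ)
    (x : Fin d → AddCircle (1 : ℝ)) :
    torusChar a (torusAct g x) = torusChar (Matrix.vecMul a g) x := by
  simp only [torusChar_eq_toCircle, torusAct, Matrix.vecMul, dotProduct, Finset.smul_sum,
    Finset.sum_smul, smul_smul]
  rw [Finset.sum_comm]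

lemma continuous_torusChar (a : Fin d → ℤ) : Continuous (torusChar a) :=
  continuous_finsetProd _ fun i _ => (fourier (a i)).continuous.comp (continuous_apply i)

lemma continuous_torusAct (g : Matrix (Fin d) (Fin d) ℤ) : Continuous (torusAct g) :=
  continuous_pi fun i => continuous_finsetSum _ fun j _ =>
    (continuous_zsmul (g i j)).comp (continuous_apply j)

end TorusChar

section MatFourier

variable {d : ℕ}

instance sFinite_matAddConv (σ τ : Measure (Matrix (Fin d) (Fin d) ℤ)) [SFinite σ] [SFinite τ] :
    SFinite (matAddConv σ τ) := by
  unfold matAddConv; infer_instance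

instance sFinite_matAddConvPow (μ : Measure (Matrix (Fin d) (Fin d) ℤ)) [SFinite μ] (n : ℕ) :
    SFinite (matAddConvPow μ n) := by
  induction n with
  | zero => unfold matAddConvPow; infer_instance
  | succ n ih => unfold matAddConvPow; infer_instance

instance isProbabilityMeasure_matAddConv (σ τ : Measure (Matrix (Fin d) (Fin d) ℤ))
    [IsProbabilityMeasure σ] [IsProbabilityMeasure τ] : IsProbabilityMeasure (matAddConv σ τ) :=
  Measure.isProbabilityMeasure_map (measurable_of_countable _).aemeasurable

instance isProbabilityMeasure_matSubConv (σ τ : Measure (Matrix (Fin d) (Fin d) ℤ))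
    [IsProbabilityMeasure σ] [IsProbabilityMeasure τ] : IsProbabilityMeasure (matSubConv σ τ) :=
  Measure.isProbabilityMeasure_map (measurable_of_countable _).aemeasurable

instance isProbabilityMeasure_matAddConvPow (μ : Measure (Matrix (Fin d) (Fin d) ℤ))
    [IsProbabilityMeasure μ] (n : ℕ) : IsProbabilityMeasure (matAddConvPow μ n) := by
  induction n with
  | zero => unfold matAddConvPow; infer_instance
  | succ n ih => unfold matAddConvPow; infer_instance

/-- The Fourier transform of `σ`, a measure on the additive group `Mat_d(ℤ)`, at its
character `g ↦ e(⟨a g, x⟩)`; hence it turns `⊞` and `⊟` into products. -/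
noncomputable def matFourier (σ : Measure (Matrix (Fin d) (Fin d) ℤ)) (a : Fin d → ℤ)
    (x : Fin d → AddCircle (1 : ℝ)) : ℂ :=
  ∫ g, torusChar (Matrix.vecMul a g) x ∂σ

lemma norm_matFourier_le_one (σ : Measure (Matrix (Fin d) (Fin d) ℤ)) [IsProbabilityMeasure σ]
    (a : Fin d → ℤ) (x : Fin d → AddCircle (1 : ℝ)) : ‖matFourier σ a x‖ ≤ 1 :=
  (norm_integral_le_integral_norm _).trans_eq (by simp [norm_torusChar])

lemma norm_torusFourier_le_one (ν : Measure (Fin d → AddCircle (1 : ℝ)))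
    [IsProbabilityMeasure ν] (a : Fin d → ℤ) : ‖torusFourier ν a‖ ≤ 1 :=
  (norm_integral_le_integral_norm _).trans_eq (by simp [norm_torusChar])

lemma matFourier_matAddConv (σ τ : Measure (Matrix (Fin d) (Fin d) ℤ)) [SFinite σ] [SFinite τ]
    (a : Fin d → ℤ) (x : Fin d → AddCircle (1 : ℝ)) :
    matFourier (matAddConv σ τ) a x = matFourier σ a x * matFourier τ a x := by
  rw [matFourier, matAddConv, integral_map (measurable_of_countable _).aemeasurable
    (measurable_of_countable _).aestronglyMeasurable]
  simp_rw [Matrix.vecMul_add, torusChar_add]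
  exact integral_prod_mul (fun g => torusChar (Matrix.vecMul a g) x)
    (fun g => torusChar (Matrix.vecMul a g) x)

lemma matFourier_matSubConv (σ τ : Measure (Matrix (Fin d) (Fin d) ℤ)) [SFinite σ] [SFinite τ]
    (a : Fin d → ℤ) (x : Fin d → AddCircle (1 : ℝ)) :
    matFourier (matSubConv σ τ) a x = matFourier σ a x * conj (matFourier τ a x) := by
  unfold matFourier
  rw [matSubConv, integral_map (measurable_of_countable _).aemeasurable
    (measurable_of_countable _).aestronglyMeasurable, ← integral_conj]
  simp_rw [Matrix.vecMul_sub, torusChar_sub]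
  exact integral_prod_mul (fun g => torusChar (Matrix.vecMul a g) x)
    (fun g => conj (torusChar (Matrix.vecMul a g) x))

lemma matFourier_matAddConvPow (μ : Measure (Matrix (Fin d) (Fin d) ℤ)) [SFinite μ]
    (a : Fin d → ℤ) (x : Fin d → AddCircle (1 : ℝ)) (n : ℕ) :
    matFourier (matAddConvPow μ n) a x = matFourier μ a x ^ n := by
  induction n with
  | zero => rw [matAddConvPow, matFourier, integral_dirac, Matrix.vecMul_zero, torusChar_zero,
      pow_zero]
  | succ n ih => rw [matAddConvPow, matFourier_matAddConv, ih, pow_succ']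

lemma matFourier_matSubConv_matAddConvPow (μ : Measure (Matrix (Fin d) (Fin d) ℤ)) [SFinite μ]
    (a : Fin d → ℤ) (x : Fin d → AddCircle (1 : ℝ)) (n : ℕ) :
    matFourier (matSubConv (matAddConvPow μ n) (matAddConvPow μ n)) a x =
      ((‖matFourier μ a x‖ ^ (2 * n) : ℝ) : ℂ) := by
  rw [matFourier_matSubConv, matFourier_matAddConvPow, Complex.mul_conj', norm_pow]
  push_cast
  ring

lemma integrable_torusChar_vecMul (σ : Measure (Matrix (Fin d) (Fin d) ℤ))
    (ν : Measure (Fin d → AddCircle (1 : ℝ))) [IsFiniteMeasure σ] [IsFiniteMeasure ν]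
    (a : Fin d → ℤ) :
    Integrable (fun p : Matrix (Fin d) (Fin d) ℤ × (Fin d → AddCircle (1 : ℝ)) =>
      torusChar (Matrix.vecMul a p.1) p.2) (σ.prod ν) := by
  have hmeas : Measurable fun p : Matrix (Fin d) (Fin d) ℤ × (Fin d → AddCircle (1 : ℝ)) =>
      torusChar (Matrix.vecMul a p.1) p.2 :=
    measurable_from_prod_countable_right fun g =>
      (continuous_torusChar (Matrix.vecMul a g)).measurable
  exact .of_bound hmeas.aestronglyMeasurable 1 (ae_of_all _ fun p => (norm_torusChar _ _).le)

lemma integrable_matFourier (σ : Measure (Matrix (Fin d) (Fin d) ℤ))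
    (ν : Measure (Fin d → AddCircle (1 : ℝ))) [IsFiniteMeasure σ] [IsFiniteMeasure ν]
    (a : Fin d → ℤ) : Integrable (matFourier σ a) ν :=
  (integrable_torusChar_vecMul σ ν a).integral_prod_right

lemma integrable_norm_matFourier_pow (σ : Measure (Matrix (Fin d) (Fin d) ℤ))
    (ν : Measure (Fin d → AddCircle (1 : ℝ))) [IsProbabilityMeasure σ] [IsFiniteMeasure ν]
    (a : Fin d → ℤ) (n : ℕ) : Integrable (fun x => ‖matFourier σ a x‖ ^ n) ν :=
  .of_bound ((integrable_matFourier σ ν a).norm.aestronglyMeasurable.pow n) 1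
    (ae_of_all _ fun x => by
      simpa using pow_le_one₀ (norm_nonneg _) (norm_matFourier_le_one σ a x))

lemma integral_matFourier (σ : Measure (Matrix (Fin d) (Fin d) ℤ))
    (ν : Measure (Fin d → AddCircle (1 : ℝ))) [IsFiniteMeasure σ] [IsFiniteMeasure ν]
    (a : Fin d → ℤ) :
    ∫ x, matFourier σ a x ∂ν = ∫ g, torusFourier ν (Matrix.vecMul a g) ∂σ :=
  (integral_integral_swap (integrable_torusChar_vecMul σ ν a)).symm

lemma torusFourier_map_torusAct (μ : Measure (Matrix (Fin d) (Fin d) ℤ))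
    (ν : Measure (Fin d → AddCircle (1 : ℝ))) [IsFiniteMeasure μ] [IsFiniteMeasure ν]
    (a : Fin d → ℤ) :
    torusFourier ((μ.prod ν).map fun p => torusAct p.1 p.2) a =
      ∫ g, torusFourier ν (Matrix.vecMul a g) ∂μ := by
  have hact : Measurable fun p : Matrix (Fin d) (Fin d) ℤ × (Fin d → AddCircle (1 : ℝ)) =>
      torusAct p.1 p.2 :=
    measurable_from_prod_countable_right fun g => (continuous_torusAct g).measurable
  rw [torusFourier, integral_map hact.aemeasurable
    (continuous_torusChar a).aestronglyMeasurable]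
  simp_rw [torusChar_torusAct]
  exact integral_prod _ (integrable_torusChar_vecMul μ ν a)

lemma integral_torusFourier_matSubConv_matAddConvPow (μ : Measure (Matrix (Fin d) (Fin d) ℤ))
    (ν : Measure (Fin d → AddCircle (1 : ℝ))) [IsProbabilityMeasure μ] [IsFiniteMeasure ν]
    (a : Fin d → ℤ) (n : ℕ) :
    ∫ g, torusFourier ν (Matrix.vecMul a g)
        ∂(matSubConv (matAddConvPow μ n) (matAddConvPow μ n)) =
      ((∫ x, ‖matFourier μ a x‖ ^ (2 * n) ∂ν : ℝ) : ℂ) := by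
  simp_rw [← integral_matFourier, matFourier_matSubConv_matAddConvPow]
  exact integral_ofReal

end MatFourier

theorem stmt4_general {d : ℕ} (μ : Measure (Matrix (Fin d) (Fin d) ℤ)) [IsProbabilityMeasure μ]
    (ν : Measure (Fin d → AddCircle (1 : ℝ))) [IsProbabilityMeasure ν]
    (a₀ : Fin d → ℤ) (t₀ : ℝ) (ht₀ : 0 < t₀)
    (hbig : t₀ ≤ ‖torusFourier ((μ.prod ν).map fun p => torusAct p.1 p.2) a₀‖)
    (k : ℕ) :
    ENNReal.ofReal (t₀ ^ (2 * k) / 2) ≤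
      matSubConv (matAddConvPow μ k) (matAddConvPow μ k)
        {g | t₀ ^ (2 * k) / 2 ≤ ‖torusFourier ν (Matrix.vecMul a₀ g)‖} := by
  set σ := matSubConv (matAddConvPow μ k) (matAddConvPow μ k)
  have hmoment : t₀ ^ (2 * k) ≤ ∫ x, ‖matFourier μ a₀ x‖ ^ (2 * k) ∂ν := by
    refine le_trans ?_ (norm_integral_pow_le_integral_norm_pow _ (integrable_matFourier μ ν a₀)
      (integrable_norm_matFourier_pow μ ν a₀ _))
    rw [integral_matFourier, ← torusFourier_map_torusAct]
    gcongr
  have hmean : ∫ x, ‖matFourier μ a₀ x‖ ^ (2 * k) ∂ν ≤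
      ∫ g, ‖torusFourier ν (Matrix.vecMul a₀ g)‖ ∂σ := by
    calc ∫ x, ‖matFourier μ a₀ x‖ ^ (2 * k) ∂ν
        = ‖∫ g, torusFourier ν (Matrix.vecMul a₀ g) ∂σ‖ := by
          rw [integral_torusFourier_matSubConv_matAddConvPow, Complex.norm_real,
            Real.norm_of_nonneg (integral_nonneg fun x => by positivity)]
      _ ≤ _ := norm_integral_le_integral_norm _
  have hlarge : ∫ g, ‖torusFourier ν (Matrix.vecMul a₀ g)‖ ∂σ ≤
      σ.real {g | t₀ ^ (2 * k) / 2 ≤ ‖torusFourier ν (Matrix.vecMul a₀ g)‖} +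
        t₀ ^ (2 * k) / 2 :=
    integral_le_measureReal_setOf_le_add
      (.of_bound (measurable_of_countable _).aestronglyMeasurable 1
        (ae_of_all _ fun g => by simpa using norm_torusFourier_le_one ν _))
      (Set.to_countable _).measurableSet (fun g => norm_torusFourier_le_one ν _) (by positivity)
  rw [← ofReal_measureReal]
  exact ENNReal.ofReal_le_ofReal (by linarith)

/-- Additive structure of large Fourier coefficients: if `|\widehat{μ*ν}(a₀)| ≥ t₀ > 0`,
then the set `A = {g : |\hat{ν}(a₀ g)| ≥ t₀^{2k}/2}` has `(μ^{⊞k} ⊟ μ^{⊞k})(A) ≥ t₀^{2k}/2`. -/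
theorem stmt4 {d : ℕ} (μ : Measure (Matrix (Fin d) (Fin d) ℤ)) [IsProbabilityMeasure μ]
    (hSL : μ {g | g.det ≠ 1} = 0)
    (ν : Measure (Fin d → AddCircle (1 : ℝ))) [IsProbabilityMeasure ν]
    (a₀ : Fin d → ℤ) (t₀ : ℝ) (ht₀ : 0 < t₀)
    (hbig : t₀ ≤ ‖torusFourier ((μ.prod ν).map fun p => torusAct p.1 p.2) a₀‖)
    (k : ℕ) (hk : 1 ≤ k) :
    ENNReal.ofReal (t₀ ^ (2 * k) / 2) ≤
      matSubConv (matAddConvPow μ k) (matAddConvPow μ k)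
        {g | t₀ ^ (2 * k) / 2 ≤ ‖torusFourier ν (Matrix.vecMul a₀ g)‖} :=
  stmt4_general μ ν a₀ t₀ ht₀ hbig k
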